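/- Let F_1,…,F_K ∈ M_n(ℂ), γ_1,…,γ_K ≥ 0, c_1,…,c_K ∈ ℂ, and define the Lindblad dissipator L(ρ) = Σ_{α=1}^K γ_α (F_α ρ F_α† − (1/2)(F_α† F_α ρ + ρ F_α† F_α)). If φ ∈ ℂ^n satisfies F_α φ = c_α φ for all α, then for ρ = φφ† one has L(ρ) = −i [ (i/2) Σ_{α=1}^K γ_α (c̄_α F_α − c_α F_α†), ρ ]; that is, on such a pure state the dissipator acts as a commutator with the Hermitian matrix (i/2) Σ_α γ_α (c̄_α F_α − c_α F_α†). -/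

import Mathlib

open Matrix
open scoped ComplexConjugate

/-- The Lindblad dissipator with jump operators `F α` and rates `γ α`. -/
noncomputable def dissip {n K : ℕ} (γ : Fin K → ℝ) (F : Fin K → Matrix (Fin n) (Fin n) ℂ)
    (ρ : Matrix (Fin n) (Fin n) ℂ) : Matrix (Fin n) (Fin n) ℂ :=
  ∑ α, (γ α : ℂ) •
    (F α * ρ * (F α)ᴴ - (1 / 2 : ℂ) • ((F α)ᴴ * F α * ρ + ρ * ((F α)ᴴ * F α)))

/-- The rank-one outer product `φφ†` of a vector with itself. -/
noncomputable def outer {n : ℕ} (φ : Fin n → ℂ) : Matrix (Fin n) (Fin n) ℂ :=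
  fun i j => φ i * conj (φ j)

/-! If `Fφ = cφ` then `ρ = φφ†` satisfies `Fρ = cρ` and `ρF† = c̄ρ`. Each jump operator
then contributes `FρF† = |c|²ρ`, `F†Fρ = cF†ρ` and `ρF†F = c̄ρF`, and the `|c|²ρ` term is
exactly what turns `-(1/2)(cF†ρ + c̄ρF)` into the commutator `(1/2)[c̄F - cF†, ρ]`. -/

lemma outer_eq_vecMulVec {n : ℕ} (φ : Fin n → ℂ) : outer φ = vecMulVec φ (star φ) := rfl

section Eigenvector

variable {l m R : Type*} [Fintype m]

lemma mul_vecMulVec_of_mulVec_eq_smul [Semiring R] {A : Matrix m m R} {φ : m → R} {c : R}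
    (h : A *ᵥ φ = c • φ) (ψ : l → R) : A * vecMulVec φ ψ = c • vecMulVec φ ψ := by
  rw [mul_vecMulVec, h, smul_vecMulVec]

lemma vecMulVec_star_mul_conjTranspose_of_mulVec_eq_smul [CommSemiring R] [StarRing R]
    {A : Matrix m m R} {φ : m → R} {c : R} (h : A *ᵥ φ = c • φ) (ψ : l → R) :
    vecMulVec ψ (star φ) * Aᴴ = star c • vecMulVec ψ (star φ) := by
  rw [vecMulVec_mul, ← star_mulVec, h, star_smul, vecMulVec_smul]

end Eigenvector

lemma mul_mul_sub_half_anticomm_eq_half_commutator {𝕜 R : Type*} [Field 𝕜] [CharZero 𝕜]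
    [Ring R] [Algebra 𝕜 R] {F G ρ : R} {c c' : 𝕜}
    (hF : F * ρ = c • ρ) (hG : ρ * G = c' • ρ) :
    F * ρ * G - (1 / 2 : 𝕜) • (G * F * ρ + ρ * (G * F)) =
      (1 / 2 : 𝕜) • ((c' • F - c • G) * ρ - ρ * (c' • F - c • G)) := by
  have hFG : F * ρ * G = (c * c') • ρ := by rw [hF, smul_mul_assoc, hG, smul_smul]
  have hGF : G * F * ρ = c • (G * ρ) := by rw [mul_assoc, hF, mul_smul_comm]
  have hρGF : ρ * (G * F) = c' • (ρ * F) := by rw [← mul_assoc, hG, smul_mul_assoc]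
  rw [hFG, hGF, hρGF, sub_mul, mul_sub, smul_mul_assoc, smul_mul_assoc,
    mul_smul_comm, mul_smul_comm, hF, hG]
  module

lemma dissip_eq_half_commutator_of_forall_eigen {n K : ℕ} (γ : Fin K → ℝ)
    (F : Fin K → Matrix (Fin n) (Fin n) ℂ) (c : Fin K → ℂ) {ρ : Matrix (Fin n) (Fin n) ℂ}
    (hF : ∀ α, F α * ρ = c α • ρ) (hFH : ∀ α, ρ * (F α)ᴴ = conj (c α) • ρ) :
    dissip γ F ρ = (1 / 2 : ℂ) •
      ((∑ α, (γ α : ℂ) • (conj (c α) • F α - c α • (F α)ᴴ)) * ρ -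
        ρ * ∑ α, (γ α : ℂ) • (conj (c α) • F α - c α • (F α)ᴴ)) := by
  rw [dissip, Finset.sum_mul, Finset.mul_sum, ← Finset.sum_sub_distrib, Finset.smul_sum]
  refine Finset.sum_congr rfl fun α _ => ?_
  rw [mul_mul_sub_half_anticomm_eq_half_commutator (hF α) (hFH α), smul_mul_assoc,
    mul_smul_comm, ← smul_sub, smul_comm]

theorem tDFS_dissipator_acts_as_commutator_general (n K : ℕ)
    (F : Fin K → Matrix (Fin n) (Fin n) ℂ) (γ : Fin K → ℝ)
    (c : Fin K → ℂ) (φ : Fin n → ℂ)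
    (hφ : ∀ α, (F α).mulVec φ = c α • φ) :
    dissip γ F (outer φ) =
      -(Complex.I) •
        (((Complex.I / 2) • ∑ α, (γ α : ℂ) • (conj (c α) • F α - c α • (F α)ᴴ))
            * outer φ -
          outer φ *
            ((Complex.I / 2) • ∑ α, (γ α : ℂ) • (conj (c α) • F α - c α • (F α)ᴴ))) := by
  have hI : -Complex.I * (Complex.I / 2) = 1 / 2 := by
    rw [neg_mul, mul_div_assoc', Complex.I_mul_I]; norm_num
  rw [smul_mul_assoc, mul_smul_comm, ← smul_sub, smul_smul, hI, outer_eq_vecMulVec]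
  exact dissip_eq_half_commutator_of_forall_eigen γ F c
    (fun α => mul_vecMulVec_of_mulVec_eq_smul (hφ α) _)
    (fun α => vecMulVec_star_mul_conjTranspose_of_mulVec_eq_smul (hφ α) _)

/-- If `φ` is a common eigenvector of all jump operators,
`F α φ = c α φ`, then on the pure state `ρ = φφ†` the dissipator acts as a commutator:
`L(ρ) = -i[(i/2) Σ_α γ_α (c̄_α F_α − c_α F_αᴴ), ρ]`. -/
theorem tDFS_dissipator_acts_as_commutator (n K : ℕ)
    (F : Fin K → Matrix (Fin n) (Fin n) ℂ) (γ : Fin K → ℝ) (hγ : ∀ α, 0 ≤ γ α)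
    (c : Fin K → ℂ) (φ : Fin n → ℂ)
    (hφ : ∀ α, (F α).mulVec φ = c α • φ) :
    dissip γ F (outer φ) =
      -(Complex.I) •
        (((Complex.I / 2) • ∑ α, (γ α : ℂ) • (conj (c α) • F α - c α • (F α)ᴴ))
            * outer φ -
          outer φ *
            ((Complex.I / 2) • ∑ α, (γ α : ℂ) • (conj (c α) • F α - c α • (F α)ᴴ))) :=
  tDFS_dissipator_acts_as_commutator_general n K F γ c φ hφ
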